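/- Let A be a torsion-free abelian group with finitely many automorphism orbits. Then A is divisible, and hence A carries the structure of a vector space over ℚ. -/

import Mathlib

section Aux

variable {A : Type*} [AddCommGroup A]

private lemma huniqZ (hTF : ∀ a : A, ∀ n : ℕ, 0 < n → n • a = 0 → a = 0)
    (m : ℤ) (hm : 0 < m) {x y : A} (h : m • x = m • y) : x = y := by
  have h0 : m • (x - y) = 0 := by rw [smul_sub, h, sub_self]
  have := hTF (x - y) m.toNat (by omega) ?_
  · exact sub_eq_zero.mp this
  · rw [← natCast_zsmul, Int.toNat_of_nonneg hm.le, h0]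

variable (hdiv : ∀ a : A, ∀ n : ℕ, 0 < n → ∃ b : A, n • b = a)

private noncomputable def rsm (q : ℚ) (a : A) : A :=
  Classical.choose (hdiv (q.num • a) q.den q.pos)

private lemma sq_spec (q : ℚ) (a : A) : (q.den : ℤ) • rsm hdiv q a = q.num • a := by
  have := Classical.choose_spec (hdiv (q.num • a) q.den q.pos)
  rw [natCast_zsmul]
  exact this

/-- `rsm q a` equals any `b` with `n • b = m • a` whenever `q = m / n`. -/
private lemma sq_eq (hTF : ∀ a : A, ∀ n : ℕ, 0 < n → n • a = 0 → a = 0) (q : ℚ) (m n : ℤ) (hn : 0 < n) (hq : (m : ℚ) / (n : ℚ) = q)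
    (a b : A) (hb : n • b = m • a) : rsm hdiv q a = b := by
  have hden : (0 : ℚ) < (q.den : ℚ) := by exact_mod_cast q.pos
  have hn' : ((n : ℚ)) ≠ 0 := by exact_mod_cast hn.ne'
  have hcross : q.num * n = m * q.den := by
    have hq' : (m : ℚ) / (n : ℚ) = (q.num : ℚ) / (q.den : ℚ) := by
      rw [hq, Rat.num_div_den]
    rw [div_eq_div_iff hn' hden.ne'] at hq'
    exact_mod_cast hq'.symm
  apply huniqZ hTF (q.den * n) (by positivity)
  calc (↑q.den * n) • rsm hdiv q a = n • ((q.den : ℤ) • rsm hdiv q a) := by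
        rw [← mul_smul, mul_comm]
    _ = n • (q.num • a) := by rw [sq_spec]
    _ = (q.num * n) • a := by rw [← mul_smul, mul_comm]
    _ = (m * q.den) • a := by rw [hcross]
    _ = (q.den : ℤ) • (m • a) := by rw [← mul_smul, mul_comm]
    _ = (q.den : ℤ) • (n • b) := by rw [hb]
    _ = (↑q.den * n) • b := by rw [← mul_smul]

private noncomputable def ratModule (hTF : ∀ a : A, ∀ n : ℕ, 0 < n → n • a = 0 → a = 0) : Module ℚ A where
  smul := rsm hdiv
  one_smul a := sq_eq hdiv hTF 1 1 1 one_pos (by norm_num) a a (by simp)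
  mul_smul q r a := by
    show rsm hdiv (q * r) a = rsm hdiv q (rsm hdiv r a)
    refine sq_eq hdiv hTF (q * r) (q.num * r.num) (q.den * r.den)
      (by positivity) ?_ a _ ?_
    · push_cast
      rw [mul_div_mul_comm, Rat.num_div_den, Rat.num_div_den]
    · calc ((q.den : ℤ) * r.den) • rsm hdiv q (rsm hdiv r a)
          = (r.den : ℤ) • ((q.den : ℤ) • rsm hdiv q (rsm hdiv r a)) := by
            rw [← mul_smul, mul_comm]
        _ = (r.den : ℤ) • (q.num • rsm hdiv r a) := by rw [sq_spec]
        _ = q.num • ((r.den : ℤ) • rsm hdiv r a) := by rw [smul_comm]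
        _ = q.num • (r.num • a) := by rw [sq_spec]
        _ = (q.num * r.num) • a := by rw [mul_smul]
  smul_zero q := by
    show rsm hdiv q 0 = 0
    apply huniqZ hTF q.den (by exact_mod_cast q.pos)
    rw [sq_spec, smul_zero, smul_zero]
  smul_add q a b := by
    show rsm hdiv q (a + b) = rsm hdiv q a + rsm hdiv q b
    apply huniqZ hTF q.den (by exact_mod_cast q.pos)
    rw [sq_spec, smul_add, smul_add, sq_spec, sq_spec]
  add_smul q r a := by
    show rsm hdiv (q + r) a = rsm hdiv q a + rsm hdiv r a
    refine sq_eq hdiv hTF (q + r) (q.num * r.den + r.num * q.den) (q.den * r.den)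
      (by positivity) ?_ a _ ?_
    · have hq : ((q.den : ℚ)) ≠ 0 := by exact_mod_cast q.pos.ne'
      have hr : ((r.den : ℚ)) ≠ 0 := by exact_mod_cast r.pos.ne'
      push_cast
      conv_rhs => rw [← Rat.num_div_den q, ← Rat.num_div_den r]
      rw [div_add_div _ _ hq hr]
      ring_nf
    · calc ((q.den : ℤ) * r.den) • (rsm hdiv q a + rsm hdiv r a)
          = (r.den : ℤ) • ((q.den : ℤ) • rsm hdiv q a)
            + (q.den : ℤ) • ((r.den : ℤ) • rsm hdiv r a) := by
            rw [smul_add, ← mul_smul, ← mul_smul, mul_comm (q.den : ℤ)]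
        _ = (r.den : ℤ) • (q.num • a) + (q.den : ℤ) • (r.num • a) := by
            rw [sq_spec, sq_spec]
        _ = (q.num * r.den + r.num * q.den) • a := by
            rw [add_smul, ← mul_smul, ← mul_smul, mul_comm (r.den : ℤ), mul_comm (q.den : ℤ)]
  zero_smul a := by
    show rsm hdiv 0 a = 0
    apply huniqZ hTF 1 one_pos
    have := sq_spec hdiv 0 a
    simpa using this

end Aux

/-- A torsion-free abelian group with finitely many automorphism orbits is divisible,
hence a ℚ-vector space. -/
theorem torsionfree_abelian_divisible
    (A : Type*) [AddCommGroup A]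
    (hTF : ∀ a : A, ∀ n : ℕ, 0 < n → n • a = 0 → a = 0)
    (hfin : Finite (AddAction.orbitRel.Quotient (AddAut A) A)) :
    (∀ a : A, ∀ n : ℕ, 0 < n → ∃ b : A, n • b = a) ∧ Nonempty (Module ℚ A) := by
  have hdiv : ∀ a : A, ∀ n : ℕ, 0 < n → ∃ b : A, n • b = a := by
    intro a n hn
    -- pigeonhole on the orbit classes of `n ^ j • a`
    set f : ℕ → AddAction.orbitRel.Quotient (AddAut A) A :=
      fun j => Quotient.mk'' (n ^ j • a) with hf
    obtain ⟨i, j, hij, hfij⟩ := Finite.exists_ne_map_eq_of_infinite f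
    have key : ∀ i j : ℕ, i < j → (∃ g : AddAut A, g +ᵥ (n ^ j • a) = n ^ i • a) →
        ∃ b : A, n • b = a := by
      rintro i j hlt ⟨g, hg⟩
      have hg' : (n ^ i : ℕ) • ((n ^ (j - i)) • (g a)) = (n ^ i : ℕ) • a := by
        have hgs : g +ᵥ (n ^ j • a) = g (n ^ j • a) := rfl
        rw [hgs, map_nsmul] at hg
        rw [← hg, ← mul_smul, ← pow_add]
        congr 2
        omega
      have h1 : (n ^ (j - i) : ℕ) • (g a) = a := by
        have hpos : (0 : ℤ) < ((n ^ i : ℕ) : ℤ) := by positivity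
        apply huniqZ hTF _ hpos
        rw [natCast_zsmul, natCast_zsmul, hg']
      refine ⟨n ^ (j - i - 1) • g a, ?_⟩
      rw [← mul_smul, show n * n ^ (j - i - 1) = n ^ (j - i) by
        rw [← pow_succ']; congr 1; omega, h1]
    have horb := Quotient.exact' hfij
    rw [AddAction.orbitRel_apply, AddAction.mem_orbit_iff] at horb
    rcases lt_or_gt_of_ne hij with h | h
    · exact key i j h horb
    · obtain ⟨g, hg⟩ := horb
      exact key j i h ⟨-g, by rw [← hg, neg_vadd_vadd]⟩
  refine ⟨hdiv, ⟨ratModule hdiv hTF⟩⟩
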